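/- Let Σ be a closed orientable stable minimal surface immersed in an oriented Riemannian 3-manifold whose sectional curvature is bounded below by -1. Then the area of Σ satisfies |Σ| ≥ 2π(g_Σ - 1), where g_Σ is the genus of Σ. -/

import Mathlib

/-!
Testing stability with the constant function `1` gives `∫ (Ric(ν,ν) + ‖A‖²) ≤ 0`. For a minimal
surface the Gauss equation reads `‖A‖² = 2 (K_M - K_Σ)`, so `2 ∫ K_Σ ≥ ∫ Ric(ν,ν) + 2 ∫ K_M`,
and the curvature bounds `Ric(ν,ν) ≥ -2`, `K_M ≥ -1` turn this into `∫ K_Σ ≥ -2 |Σ|`.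
Gauss–Bonnet then gives `2π (2 - 2g) ≥ -2 |Σ|`.
-/

open MeasureTheory Real

namespace MeasureTheory

variable {S : Type*} [MeasurableSpace S] {μ : Measure S} [IsFiniteMeasure μ]

theorem mul_measureReal_univ_le_integral {f : S → ℝ} {c : ℝ} (hf : Integrable f μ)
    (hcf : ∀ p, c ≤ f p) : c * μ.real Set.univ ≤ ∫ p, f p ∂μ := by
  simpa [integral_const, mul_comm] using integral_mono (integrable_const c) hf hcf

/-- If sectional curvatures are `≥ k`, a surface that is stable for the test function `1` has
total Gauss curvature at least `2k` times its area. -/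
theorem two_mul_mul_measureReal_univ_le_integral_of_stable {Ric KM Ksig : S → ℝ} {k : ℝ}
    (hRicInt : Integrable Ric μ) (hKMInt : Integrable KM μ) (hKsigInt : Integrable Ksig μ)
    (hKM : ∀ p, k ≤ KM p) (hRic : ∀ p, 2 * k ≤ Ric p)
    (hstab : ∫ p, (Ric p + 2 * (KM p - Ksig p)) ∂μ ≤ 0) :
    2 * k * μ.real Set.univ ≤ ∫ p, Ksig p ∂μ := by
  have hsplit : ∫ p, (Ric p + 2 * (KM p - Ksig p)) ∂μ
      = ∫ p, Ric p ∂μ + 2 * ∫ p, KM p ∂μ - 2 * ∫ p, Ksig p ∂μ := by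
    have hgaussInt : Integrable (fun p ↦ 2 * (KM p - Ksig p)) μ :=
      (hKMInt.sub hKsigInt).const_mul 2
    rw [integral_add hRicInt hgaussInt, integral_const_mul, integral_sub hKMInt hKsigInt]
    ring
  have hRicLB := mul_measureReal_univ_le_integral hRicInt hRic
  have hKMLB := mul_measureReal_univ_le_integral hKMInt hKM
  linarith

end MeasureTheory

theorem stable_minimal_surface_area_lower_bound_general
    {S : Type*} [MeasurableSpace S] (μ : Measure S) [IsFiniteMeasure μ]
    (g : ℕ)                      -- genus of the closed orientable surface Σ
    (Ric A2 Ksig KM : S → ℝ)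
    (hRicInt : Integrable Ric μ)
    (hKsigInt : Integrable Ksig μ) (hKMInt : Integrable KM μ)
    -- sectional curvature of the ambient 3-manifold bounded below by -1:
    (hKM : ∀ p, -1 ≤ KM p)
    -- hence Ric(ν,ν), a sum of two sectional curvatures, is ≥ -2:
    (hRic : ∀ p, -2 ≤ Ric p)
    -- Gauss equation for a minimal surface: ‖A‖² = 2(K_M(T_pΣ) - K_Σ):
    (hGauss : ∀ p, A2 p = 2 * (KM p - Ksig p))
    -- stability, tested with the constant function 1:
    (hstab : ∫ p, (Ric p + A2 p) ∂μ ≤ 0)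
    -- Gauss–Bonnet: ∫ K_Σ = 2πχ(Σ) = 2π(2 - 2g):
    (hGB : ∫ p, Ksig p ∂μ = 2 * π * (2 - 2 * (g : ℝ))) :
    2 * π * ((g : ℝ) - 1) ≤ (μ Set.univ).toReal := by
  obtain rfl : A2 = fun p ↦ 2 * (KM p - Ksig p) := funext hGauss
  have hgauss := two_mul_mul_measureReal_univ_le_integral_of_stable (k := -1)
    hRicInt hKMInt hKsigInt hKM (by simpa using hRic) hstab
  rw [hGB, measureReal_def] at hgauss
  linarith

/-- A closed orientable stable minimal surface `Σ` immersed in an oriented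
Riemannian 3-manifold with sectional curvature ≥ -1 has area `|Σ| ≥ 2π(g_Σ - 1)`.
The surface is encoded by its area measure `μ`; `Ric` is `Ric_M(ν,ν)`, `A2 = ‖A‖²`,
`Ksig` the intrinsic Gauss curvature, `KM` the ambient sectional curvature of the tangent
plane. Stability is used through the test function 1. -/
theorem stable_minimal_surface_area_lower_bound
    {S : Type*} [MeasurableSpace S] (μ : Measure S) [IsFiniteMeasure μ]
    (g : ℕ)                      -- genus of the closed orientable surface Σ
    (Ric A2 Ksig KM : S → ℝ)
    (hRicInt : Integrable Ric μ) (hA2Int : Integrable A2 μ)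
    (hKsigInt : Integrable Ksig μ) (hKMInt : Integrable KM μ)
    -- sectional curvature of the ambient 3-manifold bounded below by -1:
    (hKM : ∀ p, -1 ≤ KM p)
    -- hence Ric(ν,ν), a sum of two sectional curvatures, is ≥ -2:
    (hRic : ∀ p, -2 ≤ Ric p)
    -- Gauss equation for a minimal surface: ‖A‖² = 2(K_M(T_pΣ) - K_Σ):
    (hGauss : ∀ p, A2 p = 2 * (KM p - Ksig p))
    -- stability, tested with the constant function 1:
    (hstab : ∫ p, (Ric p + A2 p) ∂μ ≤ 0)
    -- Gauss–Bonnet: ∫ K_Σ = 2πχ(Σ) = 2π(2 - 2g):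
    (hGB : ∫ p, Ksig p ∂μ = 2 * π * (2 - 2 * (g : ℝ))) :
    2 * π * ((g : ℝ) - 1) ≤ (μ Set.univ).toReal :=
  stable_minimal_surface_area_lower_bound_general μ g Ric A2 Ksig KM hRicInt hKsigInt hKMInt hKM
    hRic hGauss hstab hGB
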